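/- arXiv:1308.6539 — 2 statements merged into one kernel-verified Lean document; each statement's English description precedes it below -/
import Mathlib

section
/- Let f be a hyperbolic homeomorphism of a compact metric space M, A Lipschitz and fiber bunched, x ∈ M, and y, z ∈ W^s_ε(x). Then for every n ≥ 0, ‖A^{n+1}(z)⁻¹A^{n+1}(y) − Aⁿ(z)⁻¹Aⁿ(y)‖ ≤ L e^{n(θ−λ)} d(y,z) for some constant L depending only on A and f; in particular the sequence (Aⁿ(z)⁻¹Aⁿ(y))ₙ is Cauchy. -/
open Filter Topology Metric Matrix
open scoped Matrix.Norms.L2Operator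
noncomputable section

def cocycle {M G : Type*} [Group G] (f : M → M) (A : M → G) : ℕ → M → G
  | 0, _ => 1
  | n + 1, x => A (f^[n] x) * cocycle f A n x

def zcocycle {M G : Type*} [Group G] (f : M ≃ M) (A : M → G) : ℤ → M → G
  | Int.ofNat m, x => cocycle (⇑f) A m x
  | Int.negSucc m, x => (cocycle (⇑f) A (m + 1) ((⇑f.symm)^[m + 1] x))⁻¹

def zit {M : Type*} (f : M ≃ M) : ℤ → M → M
  | Int.ofNat m, x => (⇑f)^[m] x
  | Int.negSucc m, x => (⇑f.symm)^[m + 1] x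

def gnorm {d : ℕ} (g : GL (Fin d) ℝ) : ℝ := ‖(g : Matrix (Fin d) (Fin d) ℝ)‖

def stableSet {M : Type*} [PseudoMetricSpace M] (f : M → M) (x : M) : Set M :=
  {y | Tendsto (fun n : ℕ => dist (f^[n] x) (f^[n] y)) atTop (𝓝 0)}

def localStable {M : Type*} [PseudoMetricSpace M] (f : M → M) (ε : ℝ) (x : M) : Set M :=
  {y | ∀ n : ℕ, dist (f^[n] x) (f^[n] y) ≤ ε}

structure IsHyperbolic {M : Type*} [MetricSpace M] (f : M ≃ M) (C₁ lam ε τ : ℝ) : Prop where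
  cont : Continuous f
  cont_symm : Continuous f.symm
  C₁_pos : 0 < C₁
  lam_pos : 0 < lam
  eps_pos : 0 < ε
  tau_pos : 0 < τ
  stable_contr : ∀ x y z, y ∈ localStable (⇑f) ε x → z ∈ localStable (⇑f) ε x →
    ∀ n : ℕ, dist ((⇑f)^[n] y) ((⇑f)^[n] z) ≤ C₁ * Real.exp (-lam * n) * dist y z
  unstable_contr : ∀ x y z, y ∈ localStable (⇑f.symm) ε x → z ∈ localStable (⇑f.symm) ε x →
    ∀ n : ℕ, dist ((⇑f.symm)^[n] y) ((⇑f.symm)^[n] z) ≤ C₁ * Real.exp (-lam * n) * dist y z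
  bracket : ∃ br : M → M → M,
    ContinuousOn (fun p : M × M => br p.1 p.2) {p | dist p.1 p.2 < τ} ∧
    ∀ x y, dist x y < τ → localStable (⇑f) ε x ∩ localStable (⇑f.symm) ε y = {br x y}

def FiberBunched {M : Type*} {d : ℕ} (f : M → M) (A : M → GL (Fin d) ℝ) (θ : ℝ) : Prop :=
  ∃ C₃ > (0 : ℝ), ∀ (x : M) (n : ℕ),
    gnorm (cocycle f A n x) * gnorm ((cocycle f A n x)⁻¹) ≤ C₃ * Real.exp (θ * n)

/-!
Put `Hₙ = Aⁿ(z)⁻¹ Aⁿ(y)`. Then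
`Hₙ₊₁ - Hₙ = Aⁿ(z)⁻¹ A(fⁿz)⁻¹ (A(fⁿy) - A(fⁿz)) Aⁿ(z) Hₙ`,
so Lipschitz continuity of `A`, the contraction `d(fⁿy, fⁿz) ≤ C₁ e^{-λn} d(y,z)` and fiber
bunching `‖Aⁿ(z)‖ ‖Aⁿ(z)⁻¹‖ ≤ C₃ e^{θn}` give `‖Hₙ₊₁ - Hₙ‖ ≤ c d(y,z) e^{n(θ-λ)} ‖Hₙ‖`.
Since `θ < λ`, a discrete Grönwall argument, `∏ (1 + a rᵏ) ≤ exp (a / (1 - r))`, bounds `‖Hₙ‖`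
uniformly, which turns this into the geometric estimate, and a geometric estimate on consecutive
differences makes the sequence Cauchy.
-/

theorem norm_le_mul_exp_of_norm_sub_le_geometric {E : Type*} [SeminormedAddCommGroup E]
    {b : ℕ → E} {a r : ℝ} (ha : 0 ≤ a) (hr₀ : 0 ≤ r) (hr₁ : r < 1)
    (hb : ∀ n, ‖b (n + 1) - b n‖ ≤ a * r ^ n * ‖b n‖) (n : ℕ) :
    ‖b n‖ ≤ ‖b 0‖ * Real.exp (a / (1 - r)) := by
  have partial_bound : ∀ n, ‖b n‖ ≤ ‖b 0‖ * Real.exp (a * ∑ k ∈ Finset.range n, r ^ k) := by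
    intro n
    induction n with
    | zero => simp
    | succ n ih =>
      calc ‖b (n + 1)‖ ≤ ‖b n‖ + ‖b (n + 1) - b n‖ := norm_le_insert' _ _
        _ ≤ ‖b n‖ * (a * r ^ n + 1) := by linarith [hb n]
        _ ≤ ‖b 0‖ * Real.exp (a * ∑ k ∈ Finset.range n, r ^ k) * Real.exp (a * r ^ n) := by
          gcongr
          exact Real.add_one_le_exp _
        _ = ‖b 0‖ * Real.exp (a * ∑ k ∈ Finset.range (n + 1), r ^ k) := by
          rw [Finset.sum_range_succ, mul_add, Real.exp_add, mul_assoc]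
  have geom_le : ∑ k ∈ Finset.range n, r ^ k ≤ 1 / (1 - r) := by
    simpa [← Finset.range_eq_Ico] using geom_sum_Ico_le_of_lt_one (m := 0) (n := n) hr₀ hr₁
  calc ‖b n‖ ≤ ‖b 0‖ * Real.exp (a * ∑ k ∈ Finset.range n, r ^ k) := partial_bound n
    _ ≤ ‖b 0‖ * Real.exp (a / (1 - r)) := by
      rw [← mul_one_div a]
      gcongr

theorem norm_sub_le_of_norm_sub_le_geometric {E : Type*} [SeminormedAddCommGroup E]
    {b : ℕ → E} {c s s₀ r : ℝ} (hc : 0 ≤ c) (hs : 0 ≤ s) (hs₀ : s ≤ s₀) (hr₀ : 0 ≤ r)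
    (hr₁ : r < 1) (hb : ∀ n, ‖b (n + 1) - b n‖ ≤ c * s * r ^ n * ‖b n‖) (n : ℕ) :
    ‖b (n + 1) - b n‖ ≤ c * ‖b 0‖ * Real.exp (c * s₀ / (1 - r)) * s * r ^ n := by
  have hr : 0 < 1 - r := sub_pos.2 hr₁
  calc ‖b (n + 1) - b n‖ ≤ c * s * r ^ n * ‖b n‖ := hb n
    _ ≤ c * s * r ^ n * (‖b 0‖ * Real.exp (c * s / (1 - r))) := by
      gcongr
      exact norm_le_mul_exp_of_norm_sub_le_geometric (mul_nonneg hc hs) hr₀ hr₁ hb n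
    _ ≤ c * s * r ^ n * (‖b 0‖ * Real.exp (c * s₀ / (1 - r))) := by gcongr
    _ = c * ‖b 0‖ * Real.exp (c * s₀ / (1 - r)) * s * r ^ n := by ring

theorem Units.exists_norm_inv_le_of_continuous {X R : Type*} [TopologicalSpace X]
    [CompactSpace X] [NormedRing R] [HasSummableGeomSeries R] {A : X → Rˣ}
    (hA : Continuous fun x => (A x : R)) : ∃ C ≥ (0 : ℝ), ∀ x, ‖(↑(A x)⁻¹ : R)‖ ≤ C := by
  have hinv : Continuous fun x => Ring.inverse (A x : R) :=
    continuous_iff_continuousAt.2 fun x =>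
      (NormedRing.inverse_continuousAt (A x)).comp (f := fun x => (A x : R)) hA.continuousAt
  obtain ⟨C, hC⟩ := isCompact_univ.exists_bound_of_continuousOn hinv.continuousOn
  exact ⟨max C 0, le_max_right _ _, fun x => by
    simpa [Ring.inverse_unit] using (hC x (Set.mem_univ x)).trans (le_max_left C 0)⟩

theorem dist_le_two_mul_of_mem_localStable {M : Type*} [PseudoMetricSpace M] {f : M → M}
    {ε : ℝ} {x y z : M} (hy : y ∈ localStable f ε x) (hz : z ∈ localStable f ε x) :
    dist y z ≤ 2 * ε :=
  calc dist y z ≤ dist x y + dist x z := dist_triangle_left y z x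
    _ ≤ ε + ε := add_le_add (hy 0) (hz 0)
    _ = 2 * ε := by ring

/-- Its limit as `n → ∞` is the stable holonomy `H^s_{yz}`. -/
def holonomyApprox {M G : Type*} [Group G] (f : M → M) (A : M → G) (n : ℕ) (y z : M) : G :=
  (cocycle f A n z)⁻¹ * cocycle f A n y

section holonomyApprox

variable {M R : Type*} [NormedRing R] {f : M → M} {A : M → Rˣ}

@[simp]
theorem holonomyApprox_zero (y z : M) : holonomyApprox f A 0 y z = 1 := by
  simp [holonomyApprox, cocycle]

theorem holonomyApprox_succ_sub (n : ℕ) (y z : M) :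
    ((holonomyApprox f A (n + 1) y z : Rˣ) : R) - (holonomyApprox f A n y z : Rˣ) =
      ↑(cocycle f A n z)⁻¹ * ↑(A (f^[n] z))⁻¹ * (A (f^[n] y) - A (f^[n] z)) *
        cocycle f A n z * (holonomyApprox f A n y z : Rˣ) := by
  simp only [holonomyApprox, cocycle, _root_.mul_inv_rev, Units.val_mul, mul_sub, sub_mul,
    mul_assoc, Units.mul_inv_cancel_left, Units.inv_mul_cancel_left]

theorem norm_holonomyApprox_succ_sub_le (n : ℕ) (y z : M) :
    ‖((holonomyApprox f A (n + 1) y z : Rˣ) : R) - (holonomyApprox f A n y z : Rˣ)‖ ≤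
      ‖((cocycle f A n z : Rˣ) : R)‖ * ‖(↑(cocycle f A n z)⁻¹ : R)‖ * ‖(↑(A (f^[n] z))⁻¹ : R)‖ *
        ‖(A (f^[n] y) : R) - A (f^[n] z)‖ * ‖((holonomyApprox f A n y z : Rˣ) : R)‖ := by
  rw [holonomyApprox_succ_sub]
  refine (norm_mul_le _ _).trans ?_
  calc _ ≤ ‖(↑(cocycle f A n z)⁻¹ : R)‖ * ‖(↑(A (f^[n] z))⁻¹ : R)‖ *
        ‖(A (f^[n] y) : R) - A (f^[n] z)‖ * ‖((cocycle f A n z : Rˣ) : R)‖ *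
        ‖((holonomyApprox f A n y z : Rˣ) : R)‖ := by
        gcongr
        refine (norm_mul_le _ _).trans ?_
        gcongr
        refine (norm_mul_le _ _).trans ?_
        gcongr
        exact norm_mul_le _ _
    _ = _ := by ring

theorem norm_holonomyApprox_succ_sub_le_of_bunched [PseudoMetricSpace M] {K : NNReal}
    {C₁ C₂ C₃ lam θ : ℝ} {y z : M}
    (hA : LipschitzWith K fun x => (A x : R)) (hinv : ∀ w, ‖(↑(A w)⁻¹ : R)‖ ≤ C₂)
    (hbunch : ∀ n : ℕ, ‖((cocycle f A n z : Rˣ) : R)‖ * ‖(↑(cocycle f A n z)⁻¹ : R)‖ ≤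
      C₃ * Real.exp (θ * n))
    (hcontr : ∀ n : ℕ, dist (f^[n] y) (f^[n] z) ≤ C₁ * Real.exp (-lam * n) * dist y z)
    (n : ℕ) :
    ‖((holonomyApprox f A (n + 1) y z : Rˣ) : R) - (holonomyApprox f A n y z : Rˣ)‖ ≤
      C₃ * C₂ * K * C₁ * dist y z * Real.exp (θ - lam) ^ n *
        ‖((holonomyApprox f A n y z : Rˣ) : R)‖ := by
  have hA_step :
      ‖(A (f^[n] y) : R) - A (f^[n] z)‖ ≤ K * (C₁ * Real.exp (-lam * n) * dist y z) := by
    rw [← dist_eq_norm]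
    exact (hA.dist_le_mul _ _).trans (by gcongr; exact hcontr n)
  calc _ ≤ _ := norm_holonomyApprox_succ_sub_le n y z
    _ ≤ C₃ * Real.exp (θ * n) * C₂ * (K * (C₁ * Real.exp (-lam * n) * dist y z)) *
        ‖((holonomyApprox f A n y z : Rˣ) : R)‖ := by
      have hC₂ : 0 ≤ C₂ := (norm_nonneg _).trans (hinv (f^[n] z))
      have hC₃ : 0 ≤ C₃ * Real.exp (θ * n) := (by positivity : (0 : ℝ) ≤ _ * _).trans (hbunch n)
      gcongr ?_ * ?_ * ?_ * _
      exacts [hbunch n, hinv _]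
    _ = _ := by
      rw [← Real.exp_nat_mul, mul_sub, sub_eq_add_neg, Real.exp_add]
      ring_nf

end holonomyApprox

theorem stmt4_general {M : Type*} [MetricSpace M] [CompactSpace M] {d : ℕ}
    (f : M ≃ M) (C₁ lam ε τ : ℝ) (hf : IsHyperbolic f C₁ lam ε τ)
    (A : M → GL (Fin d) ℝ)
    (hA : ∃ K : NNReal, LipschitzWith K fun x => (A x : Matrix (Fin d) (Fin d) ℝ))
    (θ : ℝ) (hθ : θ < lam) (hFB : FiberBunched (⇑f) A θ) :
    ∃ L > (0 : ℝ), ∀ x : M, ∀ y ∈ localStable (⇑f) ε x, ∀ z ∈ localStable (⇑f) ε x,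
      (∀ n : ℕ,
        ‖((((cocycle (⇑f) A (n + 1) z)⁻¹ * cocycle (⇑f) A (n + 1) y : GL (Fin d) ℝ)) :
            Matrix (Fin d) (Fin d) ℝ) -
          ((((cocycle (⇑f) A n z)⁻¹ * cocycle (⇑f) A n y : GL (Fin d) ℝ)) :
            Matrix (Fin d) (Fin d) ℝ)‖ ≤ L * Real.exp ((θ - lam) * n) * dist y z) ∧
      CauchySeq (fun n : ℕ =>
        ((((cocycle (⇑f) A n z)⁻¹ * cocycle (⇑f) A n y : GL (Fin d) ℝ)) :
          Matrix (Fin d) (Fin d) ℝ)) := by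
  obtain ⟨K, hK⟩ := hA
  obtain ⟨C₃, hC₃, hbunch⟩ := hFB
  obtain ⟨C₂, hC₂, hinv⟩ := Units.exists_norm_inv_le_of_continuous hK.continuous
  set r := Real.exp (θ - lam)
  have hr₀ : 0 ≤ r := (Real.exp_pos _).le
  have hr₁ : r < 1 := Real.exp_lt_one_iff.2 (sub_neg.2 hθ)
  set c := C₃ * C₂ * K * C₁
  have hc : 0 ≤ c := by have := hf.C₁_pos; positivity
  set L := c * ‖(1 : Matrix (Fin d) (Fin d) ℝ)‖ * Real.exp (c * (2 * ε) / (1 - r)) + 1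
  refine ⟨L, by positivity, fun x y hy z hz => ?_⟩
  have hdiff (n : ℕ) :
      ‖((holonomyApprox f A (n + 1) y z : GL (Fin d) ℝ) : Matrix (Fin d) (Fin d) ℝ) -
        (holonomyApprox f A n y z : GL (Fin d) ℝ)‖ ≤ L * dist y z * r ^ n := by
    have hstep := norm_sub_le_of_norm_sub_le_geometric
      (b := fun n => ((holonomyApprox f A n y z : GL (Fin d) ℝ) : Matrix (Fin d) (Fin d) ℝ))
      hc dist_nonneg (dist_le_two_mul_of_mem_localStable hy hz) hr₀ hr₁
      (norm_holonomyApprox_succ_sub_le_of_bunched hK hinv (hbunch z)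
        (hf.stable_contr x y z hy hz)) n
    rw [holonomyApprox_zero, Units.val_one] at hstep
    exact hstep.trans (by gcongr; linarith)
  refine ⟨fun n => ?_, cauchySeq_of_le_geometric r (L * dist y z) hr₁ fun n => ?_⟩
  · rw [mul_comm _ (n : ℝ), Real.exp_nat_mul, mul_right_comm]
    exact hdiff n
  · rw [dist_comm, dist_eq_norm]
    exact hdiff n

/-- the Cauchy estimate
`‖A^{n+1}(z)⁻¹A^{n+1}(y) − Aⁿ(z)⁻¹Aⁿ(y)‖ ≤ L e^{n(θ−λ)} d(y,z)` for `y, z` in a common local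
stable set; in particular the sequence `(Aⁿ(z)⁻¹Aⁿ(y))ₙ` is Cauchy. -/
theorem stmt4 {M : Type*} [MetricSpace M] [CompactSpace M] {d : ℕ}
    (f : M ≃ M) (C₁ lam ε τ : ℝ) (hf : IsHyperbolic f C₁ lam ε τ)
    (A : M → GL (Fin d) ℝ)
    (hA : ∃ K : NNReal, LipschitzWith K fun x => (A x : Matrix (Fin d) (Fin d) ℝ))
    (θ : ℝ) (hθ0 : 0 < θ) (hθ : θ < lam) (hFB : FiberBunched (⇑f) A θ) :
    ∃ L > (0 : ℝ), ∀ x : M, ∀ y ∈ localStable (⇑f) ε x, ∀ z ∈ localStable (⇑f) ε x,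
      (∀ n : ℕ,
        ‖((((cocycle (⇑f) A (n + 1) z)⁻¹ * cocycle (⇑f) A (n + 1) y : GL (Fin d) ℝ)) :
            Matrix (Fin d) (Fin d) ℝ) -
          ((((cocycle (⇑f) A n z)⁻¹ * cocycle (⇑f) A n y : GL (Fin d) ℝ)) :
            Matrix (Fin d) (Fin d) ℝ)‖ ≤ L * Real.exp ((θ - lam) * n) * dist y z) ∧
      CauchySeq (fun n : ℕ =>
        ((((cocycle (⇑f) A n z)⁻¹ * cocycle (⇑f) A n y : GL (Fin d) ℝ)) :
          Matrix (Fin d) (Fin d) ℝ)) :=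
  stmt4_general f C₁ lam ε τ hf A hA θ hθ hFB
end
end

section
/- Let f be a hyperbolic homeomorphism with contraction rate λ, A Lipschitz and fiber bunched with exponent θ, δ > 0 with θ + δ < λ, and suppose points y, p satisfy d(f^j(f^{-n}(y)), f^j(f^{-n}(p))) ≤ C₅ e^{-(θ+δ)min{j, 2n−j}} D for all 0 ≤ j ≤ 2n, where D = d(f^{-n}(y), fⁿ(y)). Then there exists C₉ > 0, depending only on A, λ, θ, δ, C₅, C₃ (not on n, y, p), such that ‖A^{n−j}(f^j(y))‖ · ‖(A^{n−j}(f^j(p)))⁻¹‖ ≤ C₉ e^{θ(n−j)} for all 0 ≤ j ≤ n. -/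
/-!
Telescoping along the orbit writes `(A^m p)⁻¹ - (A^m y)⁻¹` as the sum over `i < m` of
`(A^i y)⁻¹ ((A (f^i p))⁻¹ - (A (f^i y))⁻¹) (A^(m-1-i) (f^(i+1) p))⁻¹`. The middle factor is at most
a Lipschitz constant times `d(f^i y, f^i p)`, which shadowing makes of order `r^(m-i)` with
`r = e^(-(θ+δ)) < 1`. Splitting `A^m y = A^(m-1-i) (f^(i+1) y) · A (f^i y) · A^i y`, fiber bunching
bounds the `A^i y` part and induction on the length bounds the tail part, so the normalized
quantity satisfies a discrete Grönwall inequality whose solution `∏ (1 + c r^(k+1))` is bounded by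
`exp (c r / (1 - r))` independently of `m`.
-/

open Filter Topology Metric Matrix
open scoped Matrix.Norms.L2Operator
noncomputable section

open Finset Real

section Cocycle

variable {M G : Type*} [Group G] (f : M → M) (A : M → G)

theorem cocycle_add (m k : ℕ) (x : M) :
    cocycle f A (m + k) x = cocycle f A m (f^[k] x) * cocycle f A k x := by
  induction m with
  | zero => simp [cocycle]
  | succ m ih =>
    rw [Nat.add_right_comm, cocycle, cocycle, ih, Function.iterate_add_apply, mul_assoc]

theorem cocycle_succ' (m : ℕ) (x : M) : cocycle f A (m + 1) x = cocycle f A m (f x) * A x := by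
  simpa [cocycle] using cocycle_add f A m 1 x

end Cocycle

theorem val_inv_cocycle_sub_val_inv_cocycle {M R : Type*} [Ring R] (f : M → M) (A : M → Rˣ)
    (m : ℕ) (x z : M) :
    (↑(cocycle f A m z)⁻¹ : R) - ↑(cocycle f A m x)⁻¹ =
      ∑ i ∈ range m, (↑(cocycle f A i x)⁻¹ : R) * (↑(A (f^[i] z))⁻¹ - ↑(A (f^[i] x))⁻¹) *
        ↑(cocycle f A (m - 1 - i) (f^[i + 1] z))⁻¹ := by
  let T : ℕ → R := fun i => ↑(cocycle f A i x)⁻¹ * ↑(cocycle f A (m - i) (f^[i] z))⁻¹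
  have hT : ∀ i ∈ range m, T i - T (i + 1) =
      (↑(cocycle f A i x)⁻¹ : R) * (↑(A (f^[i] z))⁻¹ - ↑(A (f^[i] x))⁻¹) *
        ↑(cocycle f A (m - 1 - i) (f^[i + 1] z))⁻¹ := by
    intro i hi
    have hm : m - i = m - 1 - i + 1 := by have := mem_range.1 hi; omega
    have hz : cocycle f A (m - i) (f^[i] z) =
        cocycle f A (m - 1 - i) (f^[i + 1] z) * A (f^[i] z) := by
      rw [hm, cocycle_succ', Function.iterate_succ_apply']
    have hx : cocycle f A (i + 1) x = A (f^[i] x) * cocycle f A i x := rfl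
    simp only [T, hz, hx, show m - (i + 1) = m - 1 - i by omega, _root_.mul_inv_rev, Units.val_mul]
    noncomm_ring
  rw [← sum_congr rfl hT, sum_range_sub']
  simp [T, cocycle]

section NormedRing

variable {M R : Type*} [NormedRing R]

theorem norm_val_inv_sub_val_inv_le (u v : Rˣ) :
    ‖(↑v⁻¹ : R) - ↑u⁻¹‖ ≤ ‖(↑v⁻¹ : R)‖ * ‖(u : R) - v‖ * ‖(↑u⁻¹ : R)‖ := by
  have : (↑v⁻¹ : R) - ↑u⁻¹ = ↑v⁻¹ * ((u : R) - v) * ↑u⁻¹ := by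
    rw [mul_sub, sub_mul, mul_assoc, Units.mul_inv, mul_one, Units.inv_mul, one_mul]
  rw [this]
  exact norm_mul₃_le

theorem norm_val_inv_cocycle_le_add_sum (f : M → M) (A : M → Rˣ) (m : ℕ) (y p : M) :
    ‖(↑(cocycle f A m p)⁻¹ : R)‖ ≤ ‖(↑(cocycle f A m y)⁻¹ : R)‖ +
      ∑ i ∈ range m, ‖(↑(cocycle f A i y)⁻¹ : R)‖ *
        ‖(↑(A (f^[i] p))⁻¹ : R) - ↑(A (f^[i] y))⁻¹‖ *
          ‖(↑(cocycle f A (m - 1 - i) (f^[i + 1] p))⁻¹ : R)‖ := by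
  refine (norm_le_norm_add_norm_sub' _ (↑(cocycle f A m y)⁻¹ : R)).trans (add_le_add le_rfl ?_)
  rw [val_inv_cocycle_sub_val_inv_cocycle]
  exact (norm_sum_le _ _).trans (sum_le_sum fun i _ => norm_mul₃_le)

theorem exists_forall_norm_val_inv_le [TopologicalSpace M] [CompactSpace M] [CompleteSpace R]
    (A : M → Rˣ) (hA : Continuous fun x => (A x : R)) : ∃ C, ∀ x, ‖(↑(A x)⁻¹ : R)‖ ≤ C := by
  have hcont : Continuous fun x => Ring.inverse (A x : R) :=
    continuous_iff_continuousAt.2 fun x =>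
      (NormedRing.inverse_continuousAt (A x)).comp (f := fun x => (A x : R)) hA.continuousAt
  obtain ⟨C, hC⟩ := isCompact_univ.exists_bound_of_continuousOn hcont.continuousOn
  exact ⟨C, fun x => by simpa using hC x (Set.mem_univ x)⟩

theorem norm_val_inv_sub_val_inv_le_of_lipschitzWith [PseudoMetricSpace M] {A : M → Rˣ}
    {K : NNReal} (hA : LipschitzWith K fun x => (A x : R))
    {C : ℝ} (hC : ∀ x, ‖(↑(A x)⁻¹ : R)‖ ≤ C) (x z : M) :
    ‖(↑(A z)⁻¹ : R) - ↑(A x)⁻¹‖ ≤ C * K * C * dist x z := by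
  have hC₀ : 0 ≤ C := (norm_nonneg _).trans (hC x)
  calc _ ≤ ‖(↑(A z)⁻¹ : R)‖ * ‖(A x : R) - A z‖ * ‖(↑(A x)⁻¹ : R)‖ :=
        norm_val_inv_sub_val_inv_le _ _
    _ ≤ C * (K * dist x z) * C := by
        gcongr
        exacts [hC z, dist_eq_norm (A x : R) (A z) ▸ hA.dist_le_mul x z, hC x]
    _ = C * K * C * dist x z := by ring

end NormedRing

theorem prod_range_one_add_eq {R : Type*} [CommRing R] (u : ℕ → R) (m : ℕ) :
    ∏ k ∈ range m, (1 + u k) = 1 + ∑ k ∈ range m, u k * ∏ j ∈ range k, (1 + u j) := by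
  induction m with
  | zero => simp
  | succ m ih => rw [prod_range_succ, sum_range_succ, ih]; ring

theorem prod_range_one_add_mul_pow_succ_le_exp {c r : ℝ} (hc : 0 ≤ c) (hr₀ : 0 ≤ r) (hr₁ : r < 1)
    (m : ℕ) : ∏ k ∈ range m, (1 + c * r ^ (k + 1)) ≤ exp (c * r / (1 - r)) := by
  refine (prod_one_add_le_exp_sum _ fun k => by positivity).trans (exp_le_exp.2 ?_)
  have hgeom : ∑ k ∈ range m, r ^ k ≤ 1 / (1 - r) := by
    have := geom_sum_Ico_le_of_lt_one (m := 0) (n := m) hr₀ hr₁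
    rwa [← Finset.range_eq_Ico, pow_zero] at this
  calc ∑ k ∈ range m, c * r ^ (k + 1) = c * r * ∑ k ∈ range m, r ^ k := by
        rw [mul_sum]; exact sum_congr rfl fun k _ => by ring
    _ ≤ c * r * (1 / (1 - r)) := by gcongr
    _ = c * r / (1 - r) := by ring

section Bunching

variable {M R : Type*} [NormedRing R] (f : M → M) (A : M → Rˣ) {B C₃ θ a r : ℝ}

theorem norm_cocycle_le_of_forall_norm_le (hB : ∀ x, ‖(A x : R)‖ ≤ B) (i k : ℕ) (y : M) :
    ‖(↑(cocycle f A (k + (i + 1)) y) : R)‖ ≤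
      ‖(↑(cocycle f A k (f^[i + 1] y)) : R)‖ * B * ‖(↑(cocycle f A i y) : R)‖ := by
  rw [cocycle_add, cocycle, Units.val_mul, Units.val_mul, ← mul_assoc]
  refine norm_mul₃_le.trans ?_
  gcongr
  exact hB _

theorem norm_cocycle_mul_telescope_term_le (hB : ∀ x, ‖(A x : R)‖ ≤ B)
    (hFB : ∀ x m, ‖(↑(cocycle f A m x) : R)‖ * ‖(↑(cocycle f A m x)⁻¹ : R)‖ ≤ C₃ * exp (θ * m))
    {i k : ℕ} {y p : M} {e T : ℝ} (hη : ‖(↑(A (f^[i] p))⁻¹ : R) - ↑(A (f^[i] y))⁻¹‖ ≤ e)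
    (htail : ‖(↑(cocycle f A k (f^[i + 1] y)) : R)‖ *
      ‖(↑(cocycle f A k (f^[i + 1] p))⁻¹ : R)‖ ≤ T) :
    ‖(↑(cocycle f A (k + (i + 1)) y) : R)‖ * (‖(↑(cocycle f A i y)⁻¹ : R)‖ *
      ‖(↑(A (f^[i] p))⁻¹ : R) - ↑(A (f^[i] y))⁻¹‖ * ‖(↑(cocycle f A k (f^[i + 1] p))⁻¹ : R)‖) ≤
      B * e * (C₃ * exp (θ * i)) * T := by
  have hB₀ : 0 ≤ B := (norm_nonneg _).trans (hB y)
  have he : 0 ≤ e := (norm_nonneg _).trans hη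
  calc _ ≤ (‖(↑(cocycle f A k (f^[i + 1] y)) : R)‖ * B * ‖(↑(cocycle f A i y) : R)‖) *
          (‖(↑(cocycle f A i y)⁻¹ : R)‖ * ‖(↑(A (f^[i] p))⁻¹ : R) - ↑(A (f^[i] y))⁻¹‖ *
            ‖(↑(cocycle f A k (f^[i + 1] p))⁻¹ : R)‖) := by
        gcongr; exact norm_cocycle_le_of_forall_norm_le f A hB i k y
    _ = B * ‖(↑(A (f^[i] p))⁻¹ : R) - ↑(A (f^[i] y))⁻¹‖ *
          (‖(↑(cocycle f A i y) : R)‖ * ‖(↑(cocycle f A i y)⁻¹ : R)‖) *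
          (‖(↑(cocycle f A k (f^[i + 1] y)) : R)‖ *
            ‖(↑(cocycle f A k (f^[i + 1] p))⁻¹ : R)‖) := by ring
    _ ≤ B * e * (C₃ * exp (θ * i)) * T := by
        gcongr B * ?_ * ?_ * ?_
        · exact mul_nonneg (mul_nonneg hB₀ he)
            ((mul_nonneg (norm_nonneg _) (norm_nonneg _)).trans (hFB y i))
        · exact hFB y i

theorem norm_cocycle_mul_norm_inv_cocycle_le (hB : ∀ x, ‖(A x : R)‖ ≤ B)
    (hFB : ∀ x m, ‖(↑(cocycle f A m x) : R)‖ * ‖(↑(cocycle f A m x)⁻¹ : R)‖ ≤ C₃ * exp (θ * m))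
    (m : ℕ) (y p : M)
    (hη : ∀ i < m, ‖(↑(A (f^[i] p))⁻¹ : R) - ↑(A (f^[i] y))⁻¹‖ ≤ a * r ^ (m - i)) :
    ‖(↑(cocycle f A m y) : R)‖ * ‖(↑(cocycle f A m p)⁻¹ : R)‖ ≤
      C₃ * exp (θ * m) * ∏ k ∈ range m, (1 + C₃ * B * a * exp (-θ) * r ^ (k + 1)) := by
  set c := C₃ * B * a * exp (-θ)
  set Q : ℕ → ℝ := fun m => ∏ k ∈ range m, (1 + c * r ^ (k + 1))
  induction m using Nat.strong_induction_on generalizing y p with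
  | _ m IH =>
  have hterm : ∀ i ∈ range m, ‖(↑(cocycle f A m y) : R)‖ * (‖(↑(cocycle f A i y)⁻¹ : R)‖ *
        ‖(↑(A (f^[i] p))⁻¹ : R) - ↑(A (f^[i] y))⁻¹‖ *
          ‖(↑(cocycle f A (m - 1 - i) (f^[i + 1] p))⁻¹ : R)‖) ≤
      C₃ * exp (θ * m) * (c * r ^ (m - 1 - i + 1) * Q (m - 1 - i)) := by
    intro i hi
    obtain ⟨k, rfl⟩ : ∃ k, m = k + (i + 1) := ⟨m - 1 - i, by have := mem_range.1 hi; omega⟩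
    rw [show k + (i + 1) - 1 - i = k by omega]
    have hIH := IH k (by omega) (f^[i + 1] y) (f^[i + 1] p) fun j hj => by
      simpa only [← Function.iterate_add_apply, show k + (i + 1) - (j + (i + 1)) = k - j by omega]
        using hη (j + (i + 1)) (by omega)
    have hηi := hη i (by omega)
    rw [show k + (i + 1) - i = k + 1 by omega] at hηi
    have hexp : exp (θ * i) * exp (θ * k) = exp (θ * ↑(k + (i + 1))) * exp (-θ) := by
      rw [← exp_add, ← exp_add]; push_cast; ring_nf
    refine (norm_cocycle_mul_telescope_term_le f A hB hFB hηi hIH).trans_eq ?_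
    simp only [c]
    linear_combination (B * a * r ^ (k + 1) * C₃ * C₃ * Q k) * hexp
  calc ‖(↑(cocycle f A m y) : R)‖ * ‖(↑(cocycle f A m p)⁻¹ : R)‖
      ≤ ‖(↑(cocycle f A m y) : R)‖ * ‖(↑(cocycle f A m y)⁻¹ : R)‖ +
          ∑ i ∈ range m, ‖(↑(cocycle f A m y) : R)‖ * (‖(↑(cocycle f A i y)⁻¹ : R)‖ *
            ‖(↑(A (f^[i] p))⁻¹ : R) - ↑(A (f^[i] y))⁻¹‖ *
              ‖(↑(cocycle f A (m - 1 - i) (f^[i + 1] p))⁻¹ : R)‖) := by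
        rw [← mul_sum, ← mul_add]; gcongr; exact norm_val_inv_cocycle_le_add_sum f A m y p
    _ ≤ C₃ * exp (θ * m) +
          ∑ i ∈ range m, C₃ * exp (θ * m) * (c * r ^ (m - 1 - i + 1) * Q (m - 1 - i)) :=
        add_le_add (hFB y m) (sum_le_sum hterm)
    _ = C₃ * exp (θ * m) * Q m := by
        rw [← mul_sum, sum_range_reflect (fun k => c * r ^ (k + 1) * Q k),
          show Q m = _ from prod_range_one_add_eq (fun k => c * r ^ (k + 1)) m, mul_add, mul_one]

end Bunching

theorem dist_iterate_le_of_shadowing {M : Type*} [PseudoMetricSpace M] (f : M ≃ M) {C s D : ℝ}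
    {n : ℕ} {y p : M}
    (h : ∀ j ≤ 2 * n, dist (f^[j] (f.symm^[n] y)) (f^[j] (f.symm^[n] p)) ≤
      C * exp (-s * (↑(min j (2 * n - j)) : ℝ)) * D) {k : ℕ} (hk : k ≤ n) :
    dist (f^[k] y) (f^[k] p) ≤ C * exp (-s) ^ (n - k) * D := by
  have hkn := h (k + n) (by omega)
  rwa [Function.iterate_add_apply, Function.iterate_add_apply, f.rightInverse_symm.iterate n y,
    f.rightInverse_symm.iterate n p, show min (k + n) (2 * n - (k + n)) = n - k by omega,
    mul_comm (-s), exp_nat_mul] at hkn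

theorem stmt19_general {M : Type*} [MetricSpace M] [CompactSpace M] {d : ℕ}
    (f : M ≃ M)
    (A : M → GL (Fin d) ℝ) (K : NNReal)
    (hA : LipschitzWith K fun x => (A x : Matrix (Fin d) (Fin d) ℝ))
    (θ C₃ : ℝ) (hθ0 : 0 < θ) (hC₃ : 0 < C₃)
    (hFB : ∀ (x : M) (m : ℕ),
      gnorm (cocycle (⇑f) A m x) * gnorm ((cocycle (⇑f) A m x)⁻¹) ≤ C₃ * Real.exp (θ * m))
    (δ C₅ : ℝ) (hδ : 0 < δ) (hC₅ : 0 < C₅) :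
    ∃ C₉ > (0 : ℝ), ∀ (n : ℕ) (y p : M),
      (∀ j ≤ 2 * n, dist ((⇑f)^[j] ((⇑f.symm)^[n] y)) ((⇑f)^[j] ((⇑f.symm)^[n] p)) ≤
        C₅ * Real.exp (-(θ + δ) * (↑(min j (2 * n - j)) : ℝ)) *
          dist ((⇑f.symm)^[n] y) ((⇑f)^[n] y)) →
      ∀ j ≤ n,
        gnorm (cocycle (⇑f) A (n - j) ((⇑f)^[j] y)) *
          gnorm ((cocycle (⇑f) A (n - j) ((⇑f)^[j] p))⁻¹) ≤
        C₉ * Real.exp (θ * (↑(n - j) : ℝ)) := by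
  obtain ⟨B, hB⟩ := isCompact_univ.exists_bound_of_continuousOn hA.continuous.continuousOn
  obtain ⟨Binv, hBinv⟩ := exists_forall_norm_val_inv_le A hA.continuous
  set r := exp (-(θ + δ))
  set D := diam (Set.univ : Set M)
  set a := Binv * K * Binv * C₅ * D
  set c := C₃ * B * a * exp (-θ)
  refine ⟨C₃ * exp (c * r / (1 - r)), by positivity, fun n y p hshadow j hj => ?_⟩
  have hr₁ : r < 1 := exp_lt_one_iff.2 (by linarith)
  have hBinv₀ : 0 ≤ Binv := (norm_nonneg _).trans (hBinv y)
  have hB₀ : 0 ≤ B := (norm_nonneg _).trans (hB y trivial)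
  have hD : ∀ x z : M, dist x z ≤ D := fun x z =>
    dist_le_diam_of_mem isCompact_univ.isBounded trivial trivial
  have hη : ∀ i < n - j, ‖(↑(A (f^[i] (f^[j] p)))⁻¹ : Matrix (Fin d) (Fin d) ℝ) -
      ↑(A (f^[i] (f^[j] y)))⁻¹‖ ≤ a * r ^ (n - j - i) := by
    intro i hi
    rw [← Function.iterate_add_apply, ← Function.iterate_add_apply]
    calc _ ≤ Binv * K * Binv * dist (f^[i + j] y) (f^[i + j] p) :=
          norm_val_inv_sub_val_inv_le_of_lipschitzWith hA hBinv _ _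
      _ ≤ Binv * K * Binv * (C₅ * r ^ (n - (i + j)) * D) := by
          gcongr
          exact (dist_iterate_le_of_shadowing f hshadow (by omega)).trans (by gcongr; exact hD _ _)
      _ = a * r ^ (n - j - i) := by rw [show n - (i + j) = n - j - i by omega]; ring
  calc _ ≤ C₃ * exp (θ * ↑(n - j)) * ∏ k ∈ range (n - j), (1 + c * r ^ (k + 1)) :=
        norm_cocycle_mul_norm_inv_cocycle_le (⇑f) A (fun x => hB x trivial) hFB (n - j) _ _ hη
    _ ≤ C₃ * exp (θ * ↑(n - j)) * exp (c * r / (1 - r)) := by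
        gcongr
        exact prod_range_one_add_mul_pow_succ_le_exp (by positivity) (exp_pos _).le hr₁ _
    _ = _ := by ring

/-- along a shadowed orbit segment one has the uniform bound
`‖A^{n−j}(f^j y)‖·‖(A^{n−j}(f^j p))⁻¹‖ ≤ C₉ e^{θ(n−j)}` for `0 ≤ j ≤ n`, with `C₉` depending
only on `A, λ, θ, δ, C₅, C₃` (not on `n`, `y`, `p`). -/
theorem stmt19 {M : Type*} [MetricSpace M] [CompactSpace M] {d : ℕ}
    (f : M ≃ M) (C₁ lam ε τ : ℝ) (hf : IsHyperbolic f C₁ lam ε τ)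
    (A : M → GL (Fin d) ℝ) (K : NNReal)
    (hA : LipschitzWith K fun x => (A x : Matrix (Fin d) (Fin d) ℝ))
    (θ C₃ : ℝ) (hθ0 : 0 < θ) (hC₃ : 0 < C₃)
    (hFB : ∀ (x : M) (m : ℕ),
      gnorm (cocycle (⇑f) A m x) * gnorm ((cocycle (⇑f) A m x)⁻¹) ≤ C₃ * Real.exp (θ * m))
    (δ C₅ : ℝ) (hδ : 0 < δ) (hθδ : θ + δ < lam) (hC₅ : 0 < C₅) :
    ∃ C₉ > (0 : ℝ), ∀ (n : ℕ) (y p : M),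
      (∀ j ≤ 2 * n, dist ((⇑f)^[j] ((⇑f.symm)^[n] y)) ((⇑f)^[j] ((⇑f.symm)^[n] p)) ≤
        C₅ * Real.exp (-(θ + δ) * (↑(min j (2 * n - j)) : ℝ)) *
          dist ((⇑f.symm)^[n] y) ((⇑f)^[n] y)) →
      ∀ j ≤ n,
        gnorm (cocycle (⇑f) A (n - j) ((⇑f)^[j] y)) *
          gnorm ((cocycle (⇑f) A (n - j) ((⇑f)^[j] p))⁻¹) ≤
        C₉ * Real.exp (θ * (↑(n - j) : ℝ)) :=
  stmt19_general f A K hA θ C₃ hθ0 hC₃ hFB δ C₅ hδ hC₅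
end
end
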